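/- arXiv:2009.10354 — 4 statements merged into one kernel-verified Lean document; each statement's English description precedes it below -/
import Mathlib

section
/- For every v ∈ V with v ≠ 0, the limit d(v) := lim_{i→∞} (log‖A_{i+1} v‖ − log‖A_i v‖) exists, and d(v) is an eigenvalue of Λ, i.e. d(v) ∈ {d_1, …, d_k}. -/
open Filter Topology Finset

/-!
Split `V` orthogonally into the eigenspaces `U_j` of `Λ`, on which `exp Λ` acts as `e^{d_j}`,
and let `x_j(i) = ‖P_j (A_i v)‖ / ‖A_i v‖` be the relative weights of the iterates. Since
`A_(i+1) A_i⁻¹ → exp Λ`, the growth ratio `N_i = ‖A_(i+1) v‖ / ‖A_i v‖` satisfies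
`N_i x_j(i+1) = e^{d_j} x_j(i) + o(1)`, while `∑_j x_j(i)² = 1`. Let `j₀` be the first index whose
weight does not tend to `0`. For `l > j₀` the ratio `x_l / x_{j₀}` contracts by a fixed factor
`< 1` as long as `x_{j₀}` stays bounded below, which a cone-invariance argument guarantees; so
all weights but `x_{j₀}` vanish, `x_{j₀} → 1`, and `N_i → e^{d_{j₀}}`.
-/

theorem tendsto_zero_of_le_mul_add {u c : ℕ → ℝ} {θ : ℝ} (hθ0 : 0 ≤ θ) (hθ1 : θ < 1)
    (hu : ∀ᶠ i in atTop, 0 ≤ u i) (hrec : ∀ᶠ i in atTop, u (i + 1) ≤ θ * u i + c i)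
    (hc : Tendsto c atTop (𝓝 0)) : Tendsto u atTop (𝓝 0) := by
  refine tendsto_order.2 ⟨fun a ha => hu.mono fun i hi => ha.trans_le hi, fun η hη => ?_⟩
  have hcη : ∀ᶠ i in atTop, c i ≤ (1 - θ) * (η / 2) :=
    hc.eventually (eventually_le_nhds (by nlinarith))
  obtain ⟨i₀, hi₀⟩ := eventually_atTop.1 (hrec.and hcη)
  have hunroll : ∀ n, u (n + i₀) ≤ θ ^ n * u i₀ + η / 2 := by
    intro n
    induction n with
    | zero => rw [zero_add, pow_zero, one_mul]; linarith
    | succ n ih =>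
      obtain ⟨hr, hcn⟩ := hi₀ (n + i₀) (Nat.le_add_left _ _)
      rw [Nat.add_right_comm, pow_succ]
      nlinarith [mul_le_mul_of_nonneg_left ih hθ0]
  have hpow : ∀ᶠ n in atTop, θ ^ n * u i₀ < η / 2 := by
    have := (tendsto_pow_atTop_nhds_zero_of_lt_one hθ0 hθ1).mul_const (u i₀)
    rw [zero_mul] at this
    exact this.eventually (gt_mem_nhds (half_pos hη))
  obtain ⟨n₀, hn₀⟩ := eventually_atTop.1 hpow
  refine eventually_atTop.2 ⟨n₀ + i₀, fun i hi => ?_⟩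
  obtain ⟨n, rfl⟩ := Nat.exists_eq_add_of_le' (le_of_add_le_right hi)
  linarith [hunroll n, hn₀ n (by omega)]

theorem exists_frequently_le_of_not_tendsto_zero {α : Type*} {l : Filter α} {u : α → ℝ}
    (hu : ∀ i, 0 ≤ u i) (h : ¬Tendsto u l (𝓝 0)) : ∃ δ > 0, ∃ᶠ i in l, δ ≤ u i := by
  by_contra! H
  exact h (tendsto_order.2 ⟨fun a ha => .of_forall fun i => ha.trans_le (hu i), H⟩)

theorem div_le_div_mul_div_add {α β γ δ ε N x x' y y' : ℝ} (hγ : 0 < γ) (hγα : γ ≤ α)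
    (hδ : 0 < δ) (hx : δ ≤ x) (hN : 0 < N) (hy' : 0 ≤ y') (hε0 : 0 ≤ ε)
    (hε : ε ≤ (α - γ) * δ) (hx' : α * x - ε ≤ N * x') (hy : N * y' ≤ β * y + ε) :
    0 < x' ∧ y' / x' ≤ β / γ * (y / x) + ε / (γ * δ) := by
  have hx0 : 0 < x := hδ.trans_le hx
  have hγx : γ * x ≤ N * x' := by nlinarith [mul_le_mul_of_nonneg_left hx (sub_nonneg.2 hγα)]
  have hx'0 : 0 < x' := pos_of_mul_pos_right ((mul_pos hγ hx0).trans_le hγx) hN.le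
  refine ⟨hx'0, ?_⟩
  calc y' / x' = N * y' / (N * x') := (mul_div_mul_left _ _ hN.ne').symm
    _ ≤ (β * y + ε) / (γ * x) := div_le_div₀ ((mul_nonneg hN.le hy').trans hy) hy
        (mul_pos hγ hx0) hγx
    _ = β / γ * (y / x) + ε / (γ * x) := by field_simp
    _ ≤ β / γ * (y / x) + ε / (γ * δ) := by gcongr

section PerturbedPowerIteration

variable {ι : Type*} [Fintype ι]

/-- `x j i` is the relative size `‖P_j a_i‖ / ‖a_i‖` of the component of the `i`-th iterate in
the `j`-th eigenspace, `N i = ‖a_(i+1)‖ / ‖a_i‖` its growth and `c j` the growth rate on the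
`j`-th eigenspace. -/
structure IsPerturbedPowerIteration (c : ι → ℝ) (N ε : ℕ → ℝ) (x : ι → ℕ → ℝ) : Prop where
  nonneg : ∀ j i, 0 ≤ x j i
  sum_sq : ∀ i, ∑ j, x j i ^ 2 = 1
  pos : ∀ i, 0 < N i
  tendsto_eps : Tendsto ε atTop (𝓝 0)
  abs_sub_le : ∀ j i, |N i * x j (i + 1) - c j * x j i| ≤ ε i

namespace IsPerturbedPowerIteration

variable {c : ι → ℝ} {N ε : ℕ → ℝ} {x : ι → ℕ → ℝ}

theorem le_one (h : IsPerturbedPowerIteration c N ε x) (j : ι) (i : ℕ) : x j i ≤ 1 :=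
  (sq_le_one_iff₀ (h.nonneg j i)).1 <| h.sum_sq i ▸
    single_le_sum (f := fun j => x j i ^ 2) (fun _ _ => sq_nonneg _) (mem_univ j)

theorem eps_nonneg (h : IsPerturbedPowerIteration c N ε x) (j : ι) (i : ℕ) : 0 ≤ ε i :=
  (abs_nonneg _).trans (h.abs_sub_le j i)

theorem sub_le (h : IsPerturbedPowerIteration c N ε x) (j : ι) (i : ℕ) :
    c j * x j i - ε i ≤ N i * x j (i + 1) := by
  linarith [(abs_sub_le_iff.1 (h.abs_sub_le j i)).2]

theorem le_mul_add (h : IsPerturbedPowerIteration c N ε x) {j : ι} {β : ℝ} (hβ : c j ≤ β)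
    (i : ℕ) : N i * x j (i + 1) ≤ β * x j i + ε i := by
  nlinarith [(abs_sub_le_iff.1 (h.abs_sub_le j i)).1, h.nonneg j i]

theorem exists_not_tendsto_zero (h : IsPerturbedPowerIteration c N ε x) :
    ∃ j, ¬Tendsto (x j) atTop (𝓝 0) := by
  by_contra! h0
  have hsum := tendsto_finsetSum univ fun j _ => (h0 j).pow 2
  simp only [h.sum_sq, zero_pow two_ne_zero, sum_const_zero] at hsum
  exact one_ne_zero (tendsto_nhds_unique tendsto_const_nhds hsum)

theorem inv_le_of_forall_le_mul [LinearOrder ι] (h : IsPerturbedPowerIteration c N ε x)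
    {j₀ : ι} {R : ℝ} {i : ℕ} (hR : 1 ≤ R)
    (hsmall : ∑ l ∈ univ.filter (· < j₀), x l i ^ 2 ≤ 1 / 2)
    (hcone : ∀ l, j₀ < l → x l i ≤ R * x j₀ i) :
    (2 * Fintype.card ι * R)⁻¹ ≤ x j₀ i := by
  have hK : 0 < (Fintype.card ι : ℝ) := Nat.cast_pos.2 (Fintype.card_pos_iff.2 ⟨j₀⟩)
  have hbig : ∑ l ∈ univ.filter (fun l => ¬l < j₀), x l i ^ 2 ≤ Fintype.card ι * (R * x j₀ i) :=
    calc ∑ l ∈ univ.filter (fun l => ¬l < j₀), x l i ^ 2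
        ≤ ∑ l ∈ univ.filter (fun l => ¬l < j₀), R * x j₀ i := by
          refine sum_le_sum fun l hl => (pow_le_of_le_one (h.nonneg l i) (h.le_one l i)
            two_ne_zero).trans ?_
          rcases (not_lt.1 (mem_filter.1 hl).2).eq_or_lt with rfl | hl
          · exact le_mul_of_one_le_left (h.nonneg _ i) hR
          · exact hcone l hl
      _ ≤ ∑ _l : ι, R * x j₀ i :=
          sum_le_sum_of_subset_of_nonneg (filter_subset _ _) fun _ _ _ =>
            mul_nonneg (zero_le_one.trans hR) (h.nonneg j₀ i)
      _ = Fintype.card ι * (R * x j₀ i) := by rw [sum_const, card_univ, nsmul_eq_mul]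
  have hsplit := sum_filter_add_sum_filter_not univ (· < j₀) fun l => x l i ^ 2
  rw [h.sum_sq i] at hsplit
  rw [inv_le_iff_one_le_mul₀ (by positivity)]
  nlinarith

theorem tendsto_zero_of_eventually_ge (h : IsPerturbedPowerIteration c N ε x) {j₀ l : ι}
    {β γ δ : ℝ} (hβ0 : 0 ≤ β) (hβγ : β < γ) (hγ : γ < c j₀) (hcl : c l ≤ β) (hδ : 0 < δ)
    (hge : ∀ᶠ i in atTop, δ ≤ x j₀ i) : Tendsto (x l) atTop (𝓝 0) := by
  have hγ0 : 0 < γ := hβ0.trans_lt hβγ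
  have hε : ∀ᶠ i in atTop, ε i ≤ (c j₀ - γ) * δ :=
    h.tendsto_eps.eventually (eventually_le_nhds (mul_pos (sub_pos.2 hγ) hδ))
  have hrec : ∀ᶠ i in atTop,
      x l (i + 1) / x j₀ (i + 1) ≤ β / γ * (x l i / x j₀ i) + ε i / (γ * δ) := by
    filter_upwards [hge, hε] with i hx hεi
    exact (div_le_div_mul_div_add hγ0 hγ.le hδ hx (h.pos i) (h.nonneg l _) (h.eps_nonneg l i)
      hεi (h.sub_le j₀ i) (h.le_mul_add hcl i)).2
  have hratio : Tendsto (fun i => x l i / x j₀ i) atTop (𝓝 0) :=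
    tendsto_zero_of_le_mul_add (div_nonneg hβ0 hγ0.le) ((div_lt_one hγ0).2 hβγ)
      (.of_forall fun i => div_nonneg (h.nonneg l i) (h.nonneg j₀ i)) hrec
      (by simpa using h.tendsto_eps.div_const (γ * δ))
  refine squeeze_zero' (.of_forall (h.nonneg l)) ?_ hratio
  filter_upwards [hge] with i hx
  exact le_div_self (h.nonneg l i) (hδ.trans_le hx) (h.le_one j₀ i)

theorem forall_le_mul_succ [LinearOrder ι] (h : IsPerturbedPowerIteration c N ε x) {j₀ : ι}
    {β γ R : ℝ} {i : ℕ} (hβ0 : 0 ≤ β) (hβγ : β < γ) (hγ : γ < c j₀)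
    (hcβ : ∀ l, j₀ < l → c l ≤ β) (hR : 1 ≤ R)
    (hsmall : ∑ l ∈ univ.filter (· < j₀), x l i ^ 2 ≤ 1 / 2)
    (hε : ε i ≤ (c j₀ - γ) * (2 * Fintype.card ι * R)⁻¹)
    (hε' : ε i / (γ * (2 * Fintype.card ι * R)⁻¹) ≤ (1 - β / γ) * R)
    (hcone : ∀ l, j₀ < l → x l i ≤ R * x j₀ i) (l : ι) (hl : j₀ < l) :
    x l (i + 1) ≤ R * x j₀ (i + 1) := by
  have hγ0 : 0 < γ := hβ0.trans_lt hβγ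
  have hK : 0 < (Fintype.card ι : ℝ) := Nat.cast_pos.2 (Fintype.card_pos_iff.2 ⟨j₀⟩)
  have hx := h.inv_le_of_forall_le_mul hR hsmall hcone
  obtain ⟨hpos, hdiv⟩ := div_le_div_mul_div_add hγ0 hγ.le (by positivity) hx (h.pos i)
    (h.nonneg l _) (h.eps_nonneg l i) hε (h.sub_le j₀ i) (h.le_mul_add (hcβ l hl) i)
  have hr : x l i / x j₀ i ≤ R := (div_le_iff₀ ((by positivity : (0 : ℝ) < _).trans_le hx)).2
    (hcone l hl)
  rw [← div_le_iff₀ hpos]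
  calc x l (i + 1) / x j₀ (i + 1) ≤ β / γ * R + (1 - β / γ) * R := by
        nlinarith [div_nonneg hβ0 hγ0.le]
    _ = R := by ring

/-- Once `δ ≤ x j₀ i₁`, the cone `x l ≤ δ⁻¹ * x j₀` (`j₀ < l`) is invariant from `i₁` on, and
inside it the unit-norm condition bounds `x j₀` from below. -/
theorem eventually_ge_of_frequently_ge [LinearOrder ι] (h : IsPerturbedPowerIteration c N ε x)
    {j₀ : ι} {β γ δ : ℝ} (hβ0 : 0 ≤ β) (hβγ : β < γ) (hγ : γ < c j₀)
    (hcβ : ∀ l, j₀ < l → c l ≤ β) (hlt : ∀ l < j₀, Tendsto (x l) atTop (𝓝 0)) (hδ : 0 < δ)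
    (hfreq : ∃ᶠ i in atTop, δ ≤ x j₀ i) : ∃ δ' > 0, ∀ᶠ i in atTop, δ' ≤ x j₀ i := by
  have hγ0 : 0 < γ := hβ0.trans_lt hβγ
  have hK : 0 < (Fintype.card ι : ℝ) := Nat.cast_pos.2 (Fintype.card_pos_iff.2 ⟨j₀⟩)
  set R := δ⁻¹
  have hR : 1 ≤ R := by
    obtain ⟨i, hi⟩ := hfreq.exists
    exact (one_le_inv₀ hδ).2 (hi.trans (h.le_one j₀ i))
  set δ' := (2 * Fintype.card ι * R)⁻¹
  have hδ' : 0 < δ' := by positivity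
  have hsmall : ∀ᶠ i in atTop, ∑ l ∈ univ.filter (· < j₀), x l i ^ 2 ≤ 1 / 2 := by
    have := tendsto_finsetSum (univ.filter (· < j₀)) fun l hl =>
      (hlt l (mem_filter.1 hl).2).pow 2
    simp only [zero_pow two_ne_zero, sum_const_zero] at this
    exact this.eventually (eventually_le_nhds (by norm_num))
  have hε : ∀ᶠ i in atTop, ε i ≤ (c j₀ - γ) * δ' ∧ ε i / (γ * δ') ≤ (1 - β / γ) * R := by
    have hθ : 0 < (1 - β / γ) * R := mul_pos (sub_pos.2 ((div_lt_one hγ0).2 hβγ)) (by linarith)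
    have hε' := h.tendsto_eps.div_const (γ * δ')
    rw [zero_div] at hε'
    exact (h.tendsto_eps.eventually (eventually_le_nhds (mul_pos (sub_pos.2 hγ) hδ'))).and
      (hε'.eventually (eventually_le_nhds hθ))
  obtain ⟨i₀, hi₀⟩ := eventually_atTop.1 (hsmall.and hε)
  obtain ⟨i₁, hδi₁, hi₁⟩ := (hfreq.and_eventually (eventually_ge_atTop i₀)).exists
  have hcone : ∀ i, i₁ ≤ i → ∀ l, j₀ < l → x l i ≤ R * x j₀ i := by
    intro i hi
    induction i, hi using Nat.le_induction with
    | base =>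
      intro l _
      calc x l i₁ ≤ R * δ := by rw [inv_mul_cancel₀ hδ.ne']; exact h.le_one l i₁
        _ ≤ R * x j₀ i₁ := by gcongr
    | succ i hi ih =>
      obtain ⟨hsmall_i, hε_i, hε'_i⟩ := hi₀ i (hi₁.trans hi)
      exact h.forall_le_mul_succ hβ0 hβγ hγ hcβ hR hsmall_i hε_i hε'_i ih
  refine ⟨δ', hδ', ?_⟩
  filter_upwards [eventually_ge_atTop (max i₀ i₁)] with i hi
  exact h.inv_le_of_forall_le_mul hR (hi₀ i (le_of_max_le_left hi)).1
    (hcone i (le_of_max_le_right hi))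

theorem tendsto_one_of_tendsto_zero [DecidableEq ι] (h : IsPerturbedPowerIteration c N ε x)
    {j₀ : ι} (h0 : ∀ j ≠ j₀, Tendsto (x j) atTop (𝓝 0)) : Tendsto (x j₀) atTop (𝓝 1) := by
  have hsq : Tendsto (fun i => x j₀ i ^ 2) atTop (𝓝 1) := by
    have hrest := tendsto_finsetSum (univ.erase j₀) fun j hj => (h0 j (ne_of_mem_erase hj)).pow 2
    have key : ∀ i, x j₀ i ^ 2 = 1 - ∑ j ∈ univ.erase j₀, x j i ^ 2 := fun i => by
      rw [← h.sum_sq i, ← add_sum_erase _ _ (mem_univ j₀), add_sub_cancel_right]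
    simpa [funext key] using tendsto_const_nhds (x := (1 : ℝ)).sub hrest
  simpa [Real.sqrt_sq (h.nonneg j₀ _)] using hsq.sqrt

theorem tendsto_of_tendsto_one (h : IsPerturbedPowerIteration c N ε x) {j₀ : ι}
    (h1 : Tendsto (x j₀) atTop (𝓝 1)) : Tendsto N atTop (𝓝 (c j₀)) := by
  have h1' : Tendsto (fun i => x j₀ (i + 1)) atTop (𝓝 1) := (tendsto_add_atTop_iff_nat 1).2 h1
  have hNx : Tendsto (fun i => N i * x j₀ (i + 1)) atTop (𝓝 (c j₀)) := by
    have hcx : Tendsto (fun i => c j₀ * x j₀ i) atTop (𝓝 (c j₀)) := by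
      simpa using h1.const_mul (c j₀)
    refine tendsto_iff_dist_tendsto_zero.2 (squeeze_zero (fun _ => dist_nonneg) (fun i => ?_)
      (by simpa using (tendsto_iff_dist_tendsto_zero.1 hcx).add h.tendsto_eps))
    calc dist (N i * x j₀ (i + 1)) (c j₀)
        ≤ dist (N i * x j₀ (i + 1)) (c j₀ * x j₀ i) + dist (c j₀ * x j₀ i) (c j₀) :=
          dist_triangle _ _ _
      _ ≤ dist (c j₀ * x j₀ i) (c j₀) + ε i := by
          rw [add_comm]
          exact add_le_add_right ((Real.dist_eq _ _).trans_le (h.abs_sub_le j₀ i)) _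
  simpa using (hNx.div h1' one_ne_zero).congr' ((h1'.eventually_ne one_ne_zero).mono
    fun i hi => mul_div_cancel_right₀ (N i) hi)

theorem exists_tendsto [LinearOrder ι] (h : IsPerturbedPowerIteration c N ε x)
    (hc0 : ∀ j, 0 ≤ c j) (hc : StrictAnti c) : ∃ j, Tendsto N atTop (𝓝 (c j)) := by
  obtain ⟨j, hj⟩ := h.exists_not_tendsto_zero
  obtain ⟨j₀, hj₀, hmin⟩ := wellFounded_lt.has_min {j | ¬Tendsto (x j) atTop (𝓝 0)} ⟨j, hj⟩
  have hlt : ∀ l < j₀, Tendsto (x l) atTop (𝓝 0) := fun l hl => by_contra fun h' => hmin l h' hl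
  have hgt : ∀ l, j₀ < l → Tendsto (x l) atTop (𝓝 0) := by
    intro l hl
    let s := univ.filter (j₀ < ·)
    have hs : s.Nonempty := ⟨l, by simpa [s] using hl⟩
    have hcβ : ∀ m, j₀ < m → c m ≤ s.sup' hs c := fun m hm => le_sup' c (by simpa [s] using hm)
    have hβ : s.sup' hs c < c j₀ := (sup'_lt_iff hs).2 fun m hm => hc (by simpa [s] using hm)
    have hβ0 : 0 ≤ s.sup' hs c := (hc0 l).trans (hcβ l hl)
    obtain ⟨δ, hδ, hfreq⟩ := exists_frequently_le_of_not_tendsto_zero (h.nonneg j₀) hj₀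
    obtain ⟨δ', hδ', hge⟩ := h.eventually_ge_of_frequently_ge hβ0 (left_lt_add_div_two.2 hβ)
      (add_div_two_lt_right.2 hβ) hcβ hlt hδ hfreq
    exact h.tendsto_zero_of_eventually_ge hβ0 (left_lt_add_div_two.2 hβ)
      (add_div_two_lt_right.2 hβ) (hcβ l hl) hδ' hge
  classical
  refine ⟨j₀, h.tendsto_of_tendsto_one (h.tendsto_one_of_tendsto_zero fun l hl => ?_)⟩
  rcases hl.lt_or_gt with hl | hl
  exacts [hlt l hl, hgt l hl]

end IsPerturbedPowerIteration

end PerturbedPowerIteration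

theorem NormedSpace.exp_apply_of_apply_eq_smul {𝕜 V : Type*} [RCLike 𝕜] [NormedAddCommGroup V]
    [NormedSpace 𝕜 V] [CompleteSpace V] (T : V →L[𝕜] V) {c : 𝕜} {z : V} (h : T z = c • z) :
    NormedSpace.exp T z = NormedSpace.exp c • z := by
  have hpow : ∀ n : ℕ, (T ^ n) z = c ^ n • z := by
    intro n
    induction n with
    | zero => simp
    | succ n ih => rw [pow_succ, mul_apply_eq_comp, h, map_smul, ih, smul_smul, pow_succ']
  have hT := (NormedSpace.exp_series_hasSum_exp' (𝕂 := 𝕜) T).mapL (ContinuousLinearMap.apply 𝕜 V z)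
  have hc := (NormedSpace.exp_series_hasSum_exp' (𝕂 := 𝕜) c).smul_const z
  simp only [ContinuousLinearMap.apply_apply, FunLike.coe_smul, Pi.smul_apply, hpow,
    smul_smul] at hT
  exact hT.unique hc

theorem LinearMap.IsSymmetric.iSup_eigenspace_eq_top {𝕜 V ι : Type*} [RCLike 𝕜]
    [NormedAddCommGroup V] [InnerProductSpace 𝕜 V] [FiniteDimensional 𝕜 V] {T : V →ₗ[𝕜] V}
    (hT : T.IsSymmetric) {μ : ι → 𝕜} (hμ : ∀ ν, Module.End.HasEigenvalue T ν → ∃ j, ν = μ j) :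
    ⨆ j, Module.End.eigenspace T (μ j) = ⊤ := by
  have htop : ⨆ ν, Module.End.eigenspace T ν = ⊤ :=
    Submodule.orthogonal_eq_bot_iff.1 hT.orthogonalComplement_iSup_eigenspaces_eq_bot
  refine eq_top_iff.2 (htop.symm.le.trans (iSup_le fun ν => ?_))
  by_cases hν : Module.End.HasEigenvalue T ν
  · obtain ⟨j, rfl⟩ := hμ ν hν
    exact le_iSup (fun j => Module.End.eigenspace T (μ j)) j
  · rw [Module.End.hasEigenvalue_iff, not_not] at hν
    exact hν ▸ bot_le

namespace OrthogonalFamily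

variable {𝕜 V ι : Type*} [Fintype ι] [RCLike 𝕜] [NormedAddCommGroup V] [InnerProductSpace 𝕜 V]
  {U : ι → Submodule 𝕜 V} [∀ j, CompleteSpace (U j)]

theorem sum_norm_sq_starProjection
    (hU : OrthogonalFamily 𝕜 (fun j => U j) fun j => (U j).subtypeₗᵢ) {z : V} (hz : z ∈ iSup U) :
    ∑ j, ‖(U j).starProjection z‖ ^ 2 = ‖z‖ ^ 2 := by
  conv_rhs => rw [← hU.sum_projection_of_mem_iSup z hz]
  exact (hU.norm_sum (fun j => (U j).orthogonalProjectionOnto z) univ).symm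

theorem starProjection_apply_of_forall_apply_eq_smul
    (hU : OrthogonalFamily 𝕜 (fun j => U j) fun j => (U j).subtypeₗᵢ) {E : V →L[𝕜] V}
    {c : ι → 𝕜} (hE : ∀ j, ∀ z ∈ U j, E z = c j • z) {z : V} (hz : z ∈ iSup U) (j : ι) :
    (U j).starProjection (E z) = c j • (U j).starProjection z := by
  conv_lhs => rw [← hU.sum_projection_of_mem_iSup z hz]
  rw [map_sum, map_sum, sum_eq_single j]
  · rw [hE j _ ((U j).starProjection_apply_mem z), map_smul,
      Submodule.starProjection_eq_self_iff.mpr ((U j).starProjection_apply_mem z)]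
  · intro l _ hlj
    rw [hE l _ ((U l).starProjection_apply_mem z), map_smul,
      ((U j).starProjection_apply_eq_zero_iff).mpr
        (hU.isOrtho hlj ((U l).starProjection_apply_mem z)), smul_zero]
  · simp

theorem abs_norm_starProjection_sub_le
    (hU : OrthogonalFamily 𝕜 (fun j => U j) fun j => (U j).subtypeₗᵢ) (hspan : iSup U = ⊤)
    {E : V →L[𝕜] V} {c : ι → 𝕜} (hE : ∀ j, ∀ z ∈ U j, E z = c j • z) (F : V →L[𝕜] V) (z : V)
    (j : ι) : |‖(U j).starProjection (F z)‖ - ‖c j‖ * ‖(U j).starProjection z‖| ≤ ‖F - E‖ * ‖z‖ :=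
  calc |‖(U j).starProjection (F z)‖ - ‖c j‖ * ‖(U j).starProjection z‖|
      = |‖(U j).starProjection (F z)‖ - ‖(U j).starProjection (E z)‖| := by
        rw [hU.starProjection_apply_of_forall_apply_eq_smul hE (hspan ▸ Submodule.mem_top),
          norm_smul]
    _ ≤ ‖(U j).starProjection ((F - E) z)‖ := by
        rw [sub_apply, map_sub]; exact abs_norm_sub_norm_le _ _
    _ ≤ ‖(F - E) z‖ := (U j).norm_starProjection_apply_le _
    _ ≤ ‖F - E‖ * ‖z‖ := (F - E).le_opNorm _

theorem isPerturbedPowerIteration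
    (hU : OrthogonalFamily 𝕜 (fun j => U j) fun j => (U j).subtypeₗᵢ) (hspan : iSup U = ⊤)
    {E : V →L[𝕜] V} {c : ι → 𝕜} (hE : ∀ j, ∀ z ∈ U j, E z = c j • z) {B : ℕ → V →L[𝕜] V}
    (hB : Tendsto B atTop (𝓝 E)) {a : ℕ → V} (ha : ∀ i, a i ≠ 0)
    (hBa : ∀ i, B i (a i) = a (i + 1)) :
    IsPerturbedPowerIteration (fun j => ‖c j‖) (fun i => ‖a (i + 1)‖ / ‖a i‖)
      (fun i => ‖B i - E‖) (fun j i => ‖(U j).starProjection (a i)‖ / ‖a i‖) where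
  nonneg j i := by positivity
  sum_sq i := by
    simp_rw [div_pow, ← sum_div, hU.sum_norm_sq_starProjection (hspan ▸ Submodule.mem_top)]
    exact div_self (pow_ne_zero 2 (norm_ne_zero_iff.2 (ha i)))
  pos i := div_pos (norm_pos_iff.2 (ha _)) (norm_pos_iff.2 (ha i))
  tendsto_eps := tendsto_iff_norm_sub_tendsto_zero.1 hB
  abs_sub_le j i := by
    have key : ‖a (i + 1)‖ / ‖a i‖ * (‖(U j).starProjection (a (i + 1))‖ / ‖a (i + 1)‖)
        - ‖c j‖ * (‖(U j).starProjection (a i)‖ / ‖a i‖)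
        = (‖(U j).starProjection (B i (a i))‖ - ‖c j‖ * ‖(U j).starProjection (a i)‖) / ‖a i‖ := by
      rw [hBa]
      field_simp [norm_ne_zero_iff.2 (ha (i + 1))]
    rw [key, abs_div, abs_norm, div_le_iff₀ (norm_pos_iff.2 (ha i))]
    exact hU.abs_norm_starProjection_sub_le hspan hE (B i) (a i) j

theorem exists_tendsto_norm_div [LinearOrder ι]
    (hU : OrthogonalFamily 𝕜 (fun j => U j) fun j => (U j).subtypeₗᵢ) (hspan : iSup U = ⊤)
    {E : V →L[𝕜] V} {c : ι → 𝕜} (hE : ∀ j, ∀ z ∈ U j, E z = c j • z)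
    (hc : StrictAnti fun j => ‖c j‖) {B : ℕ → V →L[𝕜] V} (hB : Tendsto B atTop (𝓝 E))
    {a : ℕ → V} (ha : ∀ i, a i ≠ 0) (hBa : ∀ i, B i (a i) = a (i + 1)) :
    ∃ j, Tendsto (fun i => ‖a (i + 1)‖ / ‖a i‖) atTop (𝓝 ‖c j‖) :=
  (hU.isPerturbedPowerIteration hspan hE hB ha hBa).exists_tendsto (fun _ => norm_nonneg _) hc

end OrthogonalFamily

/-- Let `Λ` be a self-adjoint operator on a finite-dimensional complex inner product space
whose distinct eigenvalues are `d 0 > d 1 > … > d (k-1)`, and let `A i` be invertible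
operators with `A (i+1) ∘ (A i)⁻¹ → exp Λ`. Then for every `v ≠ 0` the limit
`d(v) = lim (log ‖A (i+1) v‖ - log ‖A i v‖)` exists and is one of the eigenvalues `d j`. -/
theorem stmt_1 {V : Type*} [NormedAddCommGroup V] [InnerProductSpace ℂ V]
    [FiniteDimensional ℂ V]
    (Λ : V →L[ℂ] V) (hΛ : IsSelfAdjoint Λ)
    (k : ℕ) (d : Fin k → ℝ) (hd : StrictAnti d)
    (heig : ∀ μ : ℂ, Module.End.HasEigenvalue (Λ : V →ₗ[ℂ] V) μ ↔ ∃ j, μ = (d j : ℂ))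
    (A : ℕ → (V ≃L[ℂ] V))
    (hA : Tendsto (fun i => ((A (i+1) : V →L[ℂ] V).comp ((A i).symm : V →L[ℂ] V)))
      atTop (𝓝 (NormedSpace.exp Λ)))
    (v : V) (hv : v ≠ 0) :
    ∃ j : Fin k, Tendsto (fun i => Real.log ‖A (i+1) v‖ - Real.log ‖A i v‖)
      atTop (𝓝 (d j)) := by
  have hsym : (Λ : V →ₗ[ℂ] V).IsSymmetric := hΛ.isSymmetric
  have hU := hsym.orthogonalFamily_eigenspaces.comp
    (Complex.ofReal_injective.comp hd.injective)
  have hspan := hsym.iSup_eigenspace_eq_top fun ν hν => (heig ν).1 hν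
  have hE : ∀ j, ∀ z ∈ Module.End.eigenspace (Λ : V →ₗ[ℂ] V) (d j),
      NormedSpace.exp Λ z = NormedSpace.exp ((d j : ℝ) : ℂ) • z := fun j z hz =>
    NormedSpace.exp_apply_of_apply_eq_smul Λ (Module.End.mem_eigenspace_iff.1 hz)
  have hnorm : ∀ j, ‖NormedSpace.exp ((d j : ℝ) : ℂ)‖ = Real.exp (d j) := fun j => by
    rw [← Complex.exp_eq_exp_ℂ, Complex.norm_exp_ofReal]
  obtain ⟨j, hj⟩ := hU.exists_tendsto_norm_div hspan hE
    (fun i j hij => by simpa only [hnorm] using Real.exp_lt_exp.2 (hd hij)) hA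
    (a := fun i => A i v) (fun i => (A i).map_ne_zero_iff.2 hv) (fun i => by simp)
  refine ⟨j, ?_⟩
  have hlog := (Real.continuousAt_log (hnorm j ▸ (Real.exp_pos (d j)).ne')).tendsto.comp hj
  rw [hnorm, Real.log_exp] at hlog
  exact hlog.congr fun i => Real.log_div (norm_ne_zero_iff.2 ((A (i + 1)).map_ne_zero_iff.2 hv))
    (norm_ne_zero_iff.2 ((A i).map_ne_zero_iff.2 hv))
end

section
/- Let V be a finite-dimensional complex inner product space, v₀ ∈ V with v₀ ≠ 0, let 𝔭 be a complex linear subspace of the endomorphisms End_ℂ(V), and let W ⊆ V be a complex linear subspace. Assume the evaluation map 𝔭 → V, X ↦ X v₀, is injective and that V = ℂv₀ ⊕ 𝔭v₀ ⊕ W, where 𝔭v₀ = {X v₀ : X ∈ 𝔭}. Then for every ε > 0 there exists δ > 0 such that for every v ∈ V with ‖v − v₀‖ < δ, there exists X ∈ 𝔭 with ‖X‖ < ε and exp(X) v ∈ ℂv₀ ⊕ W. -/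
/-!
The map `(c, X, w) ↦ exp X (c • v₀ + w)` on `ℂ × 𝔭 × W` has derivative
`(c, X, w) ↦ c • v₀ + X v₀ + w` at `(1, 0, 0)`, which is onto because `V = ℂ v₀ + 𝔭 v₀ + W`.
By the surjective form of the inverse function theorem it maps every neighbourhood of `(1, 0, 0)`
onto a neighbourhood of `v₀`. So a `v` near `v₀` is `exp X (c • v₀ + w)` with `X` small,
and `exp (-X) v = c • v₀ + w`.
-/

open Filter Topology

section

variable {𝕜 E V : Type*} [RCLike 𝕜] [NormedAddCommGroup E] [NormedSpace 𝕜 E]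
  [NormedAddCommGroup V] [NormedSpace 𝕜 V] [CompleteSpace V]

theorem HasStrictFDerivAt.exp_apply_of_eq_zero {A : E → V →L[𝕜] V} {B : E → V}
    {A' : E →L[𝕜] V →L[𝕜] V} {B' : E →L[𝕜] V} {p : E} (hA : HasStrictFDerivAt A A' p)
    (hA₀ : A p = 0) (hB : HasStrictFDerivAt B B' p) :
    HasStrictFDerivAt (fun q => NormedSpace.exp (A q) (B q))
      (B' + (ContinuousLinearMap.apply 𝕜 V (B p)).comp A') p := by
  have hexp : HasStrictFDerivAt (fun q => NormedSpace.exp (A q)) A' p := by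
    simpa using (hA₀ ▸ hasStrictFDerivAt_exp_zero (𝕂 := 𝕜)).comp p hA
  convert hexp.clm_apply hB using 1
  ext
  simp [hA₀]

theorem image_exp_apply_mem_nhds [CompleteSpace E] {A : E →L[𝕜] V →L[𝕜] V} {B : E →L[𝕜] V}
    {p : E} (hA : A p = 0) (hsurj : ∀ v, ∃ q, B q + A q (B p) = v) {s : Set E} (hs : s ∈ 𝓝 p) :
    (fun q => NormedSpace.exp (A q) (B q)) '' s ∈ 𝓝 (B p) := by
  have hmap := (A.hasStrictFDerivAt.exp_apply_of_eq_zero hA B.hasStrictFDerivAt).map_nhds_eq_of_surj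
    (LinearMap.range_eq_top.2 hsurj)
  have himage := image_mem_map (m := fun q => NormedSpace.exp (A q) (B q)) hs
  simpa [hmap, hA] using himage

theorem NormedSpace.exp_neg_apply_exp_apply (X : V →L[𝕜] V) (v : V) :
    exp (-X) (exp X v) = v := by
  have hmem (Y : V →L[𝕜] V) : Y ∈ Metric.eball 0 (expSeries 𝕜 (V →L[𝕜] V)).radius := by
    simp [expSeries_radius_eq_top]
  rw [← mul_apply_eq_comp,
    ← exp_add_of_commute_of_mem_ball (Commute.refl X).neg_left (hmem _) (hmem _),
    neg_add_cancel, exp_zero, one_apply_eq_self]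

end

theorem stmt_6_general {V : Type*} [NormedAddCommGroup V] [InnerProductSpace ℂ V]
    [FiniteDimensional ℂ V]
    (v₀ : V)
    (𝔭 : Submodule ℂ (V →L[ℂ] V)) (W : Submodule ℂ V)
    (hdecomp : ∀ v : V, ∃! t : ℂ × 𝔭 × W,
      v = t.1 • v₀ + (t.2.1 : V →L[ℂ] V) v₀ + (t.2.2 : V)) :
    ∀ ε > 0, ∃ δ > 0, ∀ v : V, ‖v - v₀‖ < δ →
      ∃ X ∈ 𝔭, ‖X‖ < ε ∧ (NormedSpace.exp X) v ∈ (ℂ ∙ v₀) ⊔ W := by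
  intro ε hε
  let A : (ℂ × 𝔭 × W) →L[ℂ] V →L[ℂ] V :=
    𝔭.subtypeL.comp ((ContinuousLinearMap.fst ℂ 𝔭 W).comp (ContinuousLinearMap.snd ℂ ℂ _))
  let B : (ℂ × 𝔭 × W) →L[ℂ] V := (ContinuousLinearMap.fst ℂ ℂ _).smulRight v₀ +
    W.subtypeL.comp ((ContinuousLinearMap.snd ℂ 𝔭 W).comp (ContinuousLinearMap.snd ℂ ℂ _))
  have hB : B (1, 0, 0) = v₀ := by simp [B]
  have hsurj (v : V) : ∃ q, B q + A q (B (1, 0, 0)) = v := by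
    obtain ⟨t, ht, -⟩ := hdecomp v
    exact ⟨t, by simp [A, B, ht]; abel⟩
  have hA : A (1, 0, 0) = 0 := by simp [A]
  have himage :=
    image_exp_apply_mem_nhds (𝕜 := ℂ) (E := ℂ × 𝔭 × W) hA hsurj (Metric.ball_mem_nhds _ hε)
  rw [hB] at himage
  obtain ⟨δ, hδ, hball⟩ := Metric.mem_nhds_iff.1 himage
  refine ⟨δ, hδ, fun v hv => ?_⟩
  obtain ⟨q, hq, rfl⟩ := hball (mem_ball_iff_norm.2 hv)
  refine ⟨-q.2.1, neg_mem q.2.1.2, ?_, ?_⟩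
  · calc ‖-(q.2.1 : V →L[ℂ] V)‖ = ‖(q - (1, 0, 0)).2.1‖ := by simp
      _ ≤ ‖q - (1, 0, 0)‖ := (norm_fst_le _).trans (norm_snd_le _)
      _ < ε := mem_ball_iff_norm.1 hq
  · change NormedSpace.exp (-A q) (NormedSpace.exp (A q) (B q)) ∈ _
    rw [NormedSpace.exp_neg_apply_exp_apply]
    exact Submodule.add_mem_sup (Submodule.smul_mem _ _ (Submodule.mem_span_singleton_self v₀))
      q.2.2.2

/-- Analytic content of the Luna-slice Lemma 3.1: if `V = ℂ v₀ ⊕ 𝔭 v₀ ⊕ W` with the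
evaluation `X ↦ X v₀` injective on `𝔭`, then every `v` close enough to `v₀` can be moved
into `ℂ v₀ ⊕ W` by `exp X` for some small `X ∈ 𝔭`. -/
theorem stmt_6 {V : Type*} [NormedAddCommGroup V] [InnerProductSpace ℂ V]
    [FiniteDimensional ℂ V]
    (v₀ : V) (hv₀ : v₀ ≠ 0)
    (𝔭 : Submodule ℂ (V →L[ℂ] V)) (W : Submodule ℂ V)
    (hinj : ∀ X ∈ 𝔭, X v₀ = 0 → X = 0)
    (hdecomp : ∀ v : V, ∃! t : ℂ × 𝔭 × W,
      v = t.1 • v₀ + (t.2.1 : V →L[ℂ] V) v₀ + (t.2.2 : V)) :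
    ∀ ε > 0, ∃ δ > 0, ∀ v : V, ‖v - v₀‖ < δ →
      ∃ X ∈ 𝔭, ‖X‖ < ε ∧ (NormedSpace.exp X) v ∈ (ℂ ∙ v₀) ⊔ W :=
  stmt_6_general v₀ 𝔭 W hdecomp
end

section
/- Let E be a finite-dimensional real normed vector space, X a compact topological space, μ a finite Borel measure on X, and T : E → C(X, ℝ) a linear map into the continuous real-valued functions on X satisfying: for every Z ∈ E with Z ≠ 0, μ({x ∈ X : (T Z)(x) > 0}) > 0. Define f : E → ℝ by f(Z) = ∫_X exp((T Z)(x)) dμ(x). Then f is proper, i.e. for every M > 0 there exists R > 0 such that f(Z) ≥ M whenever ‖Z‖ ≥ R. -/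
/-!
Since `exp t ≥ max t 0`, it suffices that `p Z = ∫ max (T Z) 0 dμ` grows linearly. The functional
`p` is continuous, positively homogeneous and, by the hypothesis on `T`, positive off `0`; its
minimum `m` on the compact unit sphere is therefore positive, and `p Z ≥ m ‖Z‖`.
-/

open Filter Topology MeasureTheory

theorem exists_pos_mul_norm_le_of_pos_homogeneous {E : Type*} [NormedAddCommGroup E]
    [NormedSpace ℝ E] [FiniteDimensional ℝ E] {f : E → ℝ} (hf : Continuous f)
    (hsmul : ∀ c : ℝ, 0 ≤ c → ∀ Z, f (c • Z) = c * f Z) (hpos : ∀ Z, Z ≠ 0 → 0 < f Z) :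
    ∃ m > 0, ∀ Z, m * ‖Z‖ ≤ f Z := by
  obtain ⟨m, hm, hmin⟩ := (isCompact_sphere (0 : E) 1).exists_forall_le' hf.continuousOn
    fun W hW ↦ hpos W (ne_zero_of_mem_unit_sphere ⟨W, hW⟩)
  refine ⟨m, hm, fun Z ↦ ?_⟩
  rcases eq_or_ne Z 0 with rfl | hZ
  · simpa using (hsmul 0 le_rfl 0).ge
  have hunit : ‖Z‖⁻¹ • Z ∈ Metric.sphere (0 : E) 1 := by
    simp [norm_smul, hZ]
  calc m * ‖Z‖ ≤ f (‖Z‖⁻¹ • Z) * ‖Z‖ := by gcongr; exact hmin _ hunit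
    _ = f Z := by
      rw [hsmul _ (by positivity), mul_comm, ← mul_assoc, mul_inv_cancel₀ (norm_ne_zero_iff.2 hZ),
        one_mul]

theorem integral_max_zero_smul {X : Type*} [TopologicalSpace X] [MeasurableSpace X]
    (μ : Measure X) {g : C(X, ℝ)} {c : ℝ} (hc : 0 ≤ c) :
    ∫ x, max ((c • g) x) 0 ∂μ = c * ∫ x, max (g x) 0 ∂μ := by
  simp_rw [ContinuousMap.smul_apply, smul_eq_mul, ← integral_const_mul, mul_max_of_nonneg _ _ hc,
    mul_zero]

section CompactFiniteMeasure

variable {X : Type*} [TopologicalSpace X] [CompactSpace X] [MeasurableSpace X] [BorelSpace X]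
  (μ : Measure X) [IsFiniteMeasure μ]

theorem ContinuousMap.integrable (g : C(X, ℝ)) : Integrable g μ :=
  (BoundedContinuousFunction.mkOfCompact g).integrable μ

theorem integral_max_zero_pos {g : C(X, ℝ)} (hg : 0 < μ {x | 0 < g x}) :
    0 < ∫ x, max (g x) 0 ∂μ := by
  rw [integral_pos_iff_support_of_nonneg (f := fun x ↦ max (g x) 0) (fun x ↦ le_max_right _ _)
    (g.integrable μ).pos_part]
  convert hg using 2
  ext x
  simp

theorem continuous_integral_max_zero {E : Type*} [TopologicalSpace E] [FirstCountableTopology E]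
    [LocallyCompactSpace E] {F : E → C(X, ℝ)} (hF : Continuous F) :
    Continuous fun Z ↦ ∫ x, max (F Z x) 0 ∂μ := by
  simpa using continuous_parametric_integral_of_continuous (μ := μ)
    (f := fun Z x ↦ max (F Z x) 0) (by fun_prop) isCompact_univ

theorem integral_max_zero_le_integral_exp (g : C(X, ℝ)) :
    ∫ x, max (g x) 0 ∂μ ≤ ∫ x, Real.exp (g x) ∂μ :=
  integral_mono (g.integrable μ).pos_part ((ContinuousMap.mk Real.exp).comp g |>.integrable μ)
    fun x ↦ max_le (by linarith [Real.add_one_le_exp (g x)]) (Real.exp_pos _).le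

end CompactFiniteMeasure

/-- Properness of `Z ↦ ∫ e^{T Z} dμ` on a finite-dimensional real normed space, when every
nonzero `Z` has `T Z > 0` on a set of positive measure (Proposition 7.6 / Lemma 2.1). -/
theorem stmt_7 {E : Type*} [NormedAddCommGroup E] [NormedSpace ℝ E] [FiniteDimensional ℝ E]
    {X : Type*} [TopologicalSpace X] [CompactSpace X] [MeasurableSpace X] [BorelSpace X]
    (μ : Measure X) [IsFiniteMeasure μ]
    (T : E →ₗ[ℝ] C(X, ℝ))
    (hT : ∀ Z : E, Z ≠ 0 → 0 < μ {x : X | 0 < T Z x}) :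
    ∀ M > 0, ∃ R > 0, ∀ Z : E, R ≤ ‖Z‖ →
      M ≤ ∫ x, Real.exp (T Z x) ∂μ := by
  intro M hM
  obtain ⟨m, hm, hlinear⟩ := exists_pos_mul_norm_le_of_pos_homogeneous
    (continuous_integral_max_zero μ (LinearMap.continuous_of_finiteDimensional T))
    (fun c hc Z ↦ by rw [map_smul, integral_max_zero_smul μ hc])
    (fun Z hZ ↦ integral_max_zero_pos μ (hT Z hZ))
  refine ⟨M / m, by positivity, fun Z hZ ↦ ?_⟩
  calc M = m * (M / m) := by field_simp
    _ ≤ m * ‖Z‖ := by gcongr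
    _ ≤ ∫ x, max (T Z x) 0 ∂μ := hlinear Z
    _ ≤ ∫ x, Real.exp (T Z x) ∂μ := integral_max_zero_le_integral_exp μ (T Z)
end

section
/- Let E be a finite-dimensional real normed vector space, X a compact topological space, μ a finite Borel measure on X, and T : E → C(X, ℝ) a linear map into the continuous real-valued functions on X satisfying: for every Z ∈ E with Z ≠ 0, μ({x ∈ X : (T Z)(x) > 0}) > 0. Define f : E → ℝ by f(Z) = ∫_X exp((T Z)(x)) dμ(x). Then f is continuous and strictly convex, and there exists a unique point Z₀ ∈ E at which f attains its infimum over E. -/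
/-!
The functional is continuous because `Z ↦ T Z` is continuous into `C(X, ℝ)` and integration is a
bounded linear functional there. Strict convexity of `exp` gives the strict convexity of `f`, since
`T a` and `T b` differ on a set of positive measure whenever `a ≠ b`. Finally `exp u ≥ max u 0`,
and `Z ↦ ∫ max (T Z) 0 dμ` is continuous, positively homogeneous and positive on the unit sphere,
hence at least `c ‖Z‖` for some `c > 0`: `f` is coercive, so it attains its minimum, which strict
convexity makes unique.
-/

open Filter Topology MeasureTheory

namespace ContinuousMap

variable {X : Type*} [TopologicalSpace X] [CompactSpace X] [MeasurableSpace X] [BorelSpace X]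
  (μ : Measure X) [IsFiniteMeasure μ]

lemma continuous_integral : Continuous fun g : C(X, ℝ) => ∫ x, g x ∂μ := by
  have h : (fun g : C(X, ℝ) => ∫ x, g x ∂μ) = fun g => ∫ x, toLp 1 μ ℝ g x ∂μ :=
    funext fun g => (integral_congr_ae (coeFn_toLp μ g)).symm
  rw [h]
  exact MeasureTheory.continuous_integral.comp (toLp 1 μ ℝ).continuous

end ContinuousMap

lemma Continuous.integrable_of_compactSpace {X : Type*} [TopologicalSpace X] [CompactSpace X]
    [MeasurableSpace X] [OpensMeasurableSpace X] {μ : Measure X} [IsFiniteMeasure μ] {g : X → ℝ}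
    (hg : Continuous g) : Integrable g μ :=
  hg.integrable_of_hasCompactSupport (.of_compactSpace g)

section IntegralComp

variable {E X : Type*} [TopologicalSpace X] [CompactSpace X] [MeasurableSpace X] [BorelSpace X]
  {μ : Measure X} [IsFiniteMeasure μ]

lemma continuous_integral_comp [TopologicalSpace E] {T : E → C(X, ℝ)} (hT : Continuous T)
    {φ : ℝ → ℝ} (hφ : Continuous φ) : Continuous fun Z => ∫ x, φ (T Z x) ∂μ :=
  (ContinuousMap.continuous_integral μ).comp ((ContinuousMap.continuous_postcomp ⟨φ, hφ⟩).comp hT)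

lemma strictConvexOn_integral_comp [AddCommGroup E] [Module ℝ E] {φ : ℝ → ℝ}
    (hφ : StrictConvexOn ℝ Set.univ φ) (hφc : Continuous φ) (T : E →ₗ[ℝ] C(X, ℝ))
    (hT : ∀ Z : E, Z ≠ 0 → μ {x | T Z x ≠ 0} ≠ 0) :
    StrictConvexOn ℝ Set.univ fun Z => ∫ x, φ (T Z x) ∂μ := by
  refine ⟨convex_univ, fun a _ b _ hab s t hs ht hst => ?_⟩
  let gap : C(X, ℝ) :=
    ⟨fun x => s * φ (T a x) + t * φ (T b x) - φ (T (s • a + t • b) x), by fun_prop⟩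
  have hT_comb (x : X) : T (s • a + t • b) x = s • T a x + t • T b x := by simp
  have hgap_nonneg : 0 ≤ ⇑gap := fun x => by
    simpa [gap, hT_comb, sub_nonneg] using
      hφ.convexOn.2 (Set.mem_univ (T a x)) (Set.mem_univ (T b x)) hs.le ht.le hst
  have hgap_pos : 0 < ∫ x, gap x ∂μ := by
    rw [integral_pos_iff_support_of_nonneg hgap_nonneg gap.continuous.integrable_of_compactSpace,
      pos_iff_ne_zero]
    refine fun h => hT (a - b) (sub_ne_zero.2 hab) (measure_mono_null (fun x hx => ?_) h)
    have hne : T a x ≠ T b x := by simpa [sub_eq_zero] using hx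
    simpa [gap, hT_comb, sub_eq_zero] using
      (hφ.2 (Set.mem_univ _) (Set.mem_univ _) hne hs ht hst).ne'
  have hint (Z : E) : Integrable (fun x => φ (T Z x)) μ :=
    (hφc.comp (T Z).continuous).integrable_of_compactSpace
  have hcomb_int : Integrable (fun x => s * φ (T a x) + t * φ (T b x)) μ :=
    ((hint a).const_mul s).add ((hint b).const_mul t)
  have hgap_int : ∫ x, gap x ∂μ = s * ∫ x, φ (T a x) ∂μ + t * ∫ x, φ (T b x) ∂μ
      - ∫ x, φ (T (s • a + t • b) x) ∂μ := by
    simp only [gap, ContinuousMap.coe_mk]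
    rw [integral_sub hcomb_int (hint _),
      integral_add ((hint a).const_mul s) ((hint b).const_mul t), integral_const_mul,
      integral_const_mul]
  simp only [smul_eq_mul]
  linarith

end IntegralComp

lemma exists_pos_mul_norm_le_of_homogeneous {E : Type*} [NormedAddCommGroup E] [NormedSpace ℝ E]
    [ProperSpace E] {g : E → ℝ} (hg : Continuous g) (hhom : ∀ r : ℝ, 0 ≤ r → ∀ Z, g (r • Z) = r * g Z)
    (hpos : ∀ Z : E, Z ≠ 0 → 0 < g Z) : ∃ c : ℝ, 0 < c ∧ ∀ Z, c * ‖Z‖ ≤ g Z := by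
  rcases subsingleton_or_nontrivial E with hE | hE
  · refine ⟨1, one_pos, fun Z => ?_⟩
    rw [Subsingleton.elim Z 0, norm_zero, mul_zero, ← zero_smul ℝ (0 : E), hhom 0 le_rfl, zero_mul]
  obtain ⟨W, hW, hWmin⟩ := (isCompact_sphere (0 : E) 1).exists_isMinOn
    (NormedSpace.sphere_nonempty.2 zero_le_one) hg.continuousOn
  refine ⟨g W, hpos W (ne_zero_of_mem_unit_sphere ⟨W, hW⟩), fun Z => ?_⟩
  rcases eq_or_ne Z 0 with rfl | hZ
  · rw [norm_zero, mul_zero, ← zero_smul ℝ (0 : E), hhom 0 le_rfl, zero_mul]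
  have hZn : ‖Z‖ ≠ 0 := norm_ne_zero_iff.2 hZ
  have hunit : ‖Z‖⁻¹ • Z ∈ Metric.sphere (0 : E) 1 := by
    simp [norm_smul, inv_mul_cancel₀ hZn]
  calc g W * ‖Z‖ ≤ g (‖Z‖⁻¹ • Z) * ‖Z‖ := by gcongr; exact hWmin hunit
    _ = g Z := by
      rw [mul_comm, ← hhom _ (norm_nonneg Z), smul_smul, mul_inv_cancel₀ hZn, one_smul]

lemma Real.max_zero_le_exp (u : ℝ) : max u 0 ≤ Real.exp u :=
  max_le (by linarith [Real.add_one_le_exp u]) (Real.exp_nonneg u)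

lemma exists_pos_mul_norm_le_integral_max {E X : Type*} [NormedAddCommGroup E] [NormedSpace ℝ E]
    [FiniteDimensional ℝ E] [TopologicalSpace X] [CompactSpace X] [MeasurableSpace X]
    [BorelSpace X] {μ : Measure X} [IsFiniteMeasure μ] (T : E →ₗ[ℝ] C(X, ℝ))
    (hT : ∀ Z : E, Z ≠ 0 → 0 < μ {x | 0 < T Z x}) :
    ∃ c : ℝ, 0 < c ∧ ∀ Z, c * ‖Z‖ ≤ ∫ x, max (T Z x) 0 ∂μ := by
  refine exists_pos_mul_norm_le_of_homogeneous
    (continuous_integral_comp T.continuous_of_finiteDimensional (continuous_id.max continuous_const))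
    (fun r hr Z => ?_) (fun Z hZ => ?_)
  · simp only [map_smul, ContinuousMap.smul_apply, smul_eq_mul, ← integral_const_mul,
      mul_max_of_nonneg _ _ hr, mul_zero]
  · rw [integral_pos_iff_support_of_nonneg (f := fun x => max (T Z x) 0) (fun x => le_max_right _ _)
      ((T Z).continuous.max continuous_const).integrable_of_compactSpace]
    refine (hT Z hZ).trans_le (measure_mono fun x hx => ?_)
    exact (lt_max_of_lt_left hx).ne'

lemma StrictConvexOn.existsUnique_forall_le {E : Type*} [TopologicalSpace E] [AddCommGroup E]
    [Module ℝ E] {f : E → ℝ} (hconv : StrictConvexOn ℝ Set.univ f) (hcont : Continuous f)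
    (hf : Tendsto f (cocompact E) atTop) : ∃! Z₀ : E, ∀ Z, f Z₀ ≤ f Z := by
  obtain ⟨Z₀, hZ₀⟩ := hcont.exists_forall_le hf
  exact ⟨Z₀, hZ₀, fun Y hY => hconv.eq_of_isMinOn (fun Z _ => hY Z) (fun Z _ => hZ₀ Z)
    (Set.mem_univ _) (Set.mem_univ _)⟩

/-- The functional `f Z = ∫ e^{T Z} dμ` is continuous and strictly convex, and attains its
infimum at a unique point (core of Proposition 7.6: uniqueness of the soliton vector field). -/
theorem stmt_8 {E : Type*} [NormedAddCommGroup E] [NormedSpace ℝ E] [FiniteDimensional ℝ E]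
    {X : Type*} [TopologicalSpace X] [CompactSpace X] [MeasurableSpace X] [BorelSpace X]
    (μ : Measure X) [IsFiniteMeasure μ]
    (T : E →ₗ[ℝ] C(X, ℝ))
    (hT : ∀ Z : E, Z ≠ 0 → 0 < μ {x : X | 0 < T Z x})
    (f : E → ℝ) (hf : f = fun Z => ∫ x, Real.exp (T Z x) ∂μ) :
    Continuous f ∧ StrictConvexOn ℝ Set.univ f ∧
      ∃! Z₀ : E, ∀ Z : E, f Z₀ ≤ f Z := by
  subst hf
  have hcont := continuous_integral_comp (μ := μ) T.continuous_of_finiteDimensional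
    Real.continuous_exp
  have hconv := strictConvexOn_integral_comp strictConvexOn_exp Real.continuous_exp T
    fun Z hZ => ((hT Z hZ).trans_le (measure_mono fun x hx => ne_of_gt hx)).ne'
  obtain ⟨c, hc, hcZ⟩ := exists_pos_mul_norm_le_integral_max T hT
  have hcoercive : Tendsto (fun Z => ∫ x, Real.exp (T Z x) ∂μ) (cocompact E) atTop := by
    refine tendsto_atTop_mono (fun Z => (hcZ Z).trans ?_)
      (tendsto_norm_cocompact_atTop.const_mul_atTop hc)
    exact integral_mono ((T Z).continuous.max continuous_const).integrable_of_compactSpace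
      (Real.continuous_exp.comp (T Z).continuous).integrable_of_compactSpace
      fun x => Real.max_zero_le_exp _
  exact ⟨hcont, hconv, hconv.existsUnique_forall_le hcont hcoercive⟩
end
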